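/- Let S be a 0-simplifying Tarski monoid. Then every ultrafilter of S contains an infinitesimal or a product ab of two infinitesimals a and b. -/

import Mathlib

universe u

/-- An inverse monoid with zero: every element `a` has a unique generalized
inverse `a⁻¹`, and `0` is an absorbing element. -/
class InverseMonoidWithZero (S : Type u) extends Monoid S, Zero S, Inv S where
  zero_mul' : ∀ a : S, 0 * a = 0
  mul_zero' : ∀ a : S, a * 0 = 0
  mul_inv_mul : ∀ a : S, a * a⁻¹ * a = a
  inv_mul_inv : ∀ a : S, a⁻¹ * a * a⁻¹ = a⁻¹
  inv_unique : ∀ a b : S, a * b * a = a → b * a * b = b → b = a⁻¹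

section BasicDefs

variable {S : Type u}

/-- The natural partial order: `a ≤ b` iff `a = e * b` for some idempotent `e`. -/
def nle [InverseMonoidWithZero S] (a b : S) : Prop :=
  ∃ e : S, e * e = e ∧ a = e * b

/-- `a` and `b` are compatible if `a * b⁻¹` and `a⁻¹ * b` are idempotents. -/
def Compat [InverseMonoidWithZero S] (a b : S) : Prop :=
  (a * b⁻¹) * (a * b⁻¹) = a * b⁻¹ ∧ (a⁻¹ * b) * (a⁻¹ * b) = a⁻¹ * b

/-- `a` and `b` are orthogonal if `a * b⁻¹ = 0` and `a⁻¹ * b = 0`. -/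
def Orth [InverseMonoidWithZero S] (a b : S) : Prop :=
  a * b⁻¹ = 0 ∧ a⁻¹ * b = 0

end BasicDefs

/-- A distributive inverse monoid: every compatible pair has a join (for the
natural partial order), recorded by `sup`, and multiplication distributes over
these binary joins. -/
class DistributiveInverseMonoid (S : Type u) extends InverseMonoidWithZero S where
  sup : S → S → S
  le_sup_left : ∀ a b : S, Compat a b → nle a (sup a b)
  le_sup_right : ∀ a b : S, Compat a b → nle b (sup a b)
  sup_le : ∀ a b c : S, Compat a b → nle a c → nle b c → nle (sup a b) c
  mul_sup : ∀ a b c : S, Compat a b → c * sup a b = sup (c * a) (c * b)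
  sup_mul : ∀ a b c : S, Compat a b → sup a b * c = sup (a * c) (b * c)

/-- A Boolean inverse monoid: a distributive inverse monoid whose idempotents
form a Boolean algebra under the natural partial order; `compl` records the
complementation on idempotents. -/
class BooleanInverseMonoid (S : Type u) extends DistributiveInverseMonoid S where
  compl : S → S
  compl_idem : ∀ e : S, e * e = e → compl e * compl e = compl e
  mul_compl : ∀ e : S, e * e = e → e * compl e = 0
  sup_compl : ∀ e : S, e * e = e → sup e (compl e) = 1

/-- A Boolean inverse ∧-monoid: a Boolean inverse monoid in which every pair of
elements has a meet with respect to the natural partial order. -/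
class BooleanInverseMeetMonoid (S : Type u) extends BooleanInverseMonoid S where
  inf : S → S → S
  inf_le_left : ∀ a b : S, nle (inf a b) a
  inf_le_right : ∀ a b : S, nle (inf a b) b
  le_inf : ∀ a b c : S, nle c a → nle c b → nle c (inf a b)

section MoreDefs

variable {S : Type u}

/-- The join of a compatible pair. -/
def bsup [DistributiveInverseMonoid S] (a b : S) : S := DistributiveInverseMonoid.sup a b

/-- Complementation in the Boolean algebra of idempotents. -/
def bcompl [BooleanInverseMonoid S] (e : S) : S := BooleanInverseMonoid.compl e

/-- The binary meet. -/
def binf [BooleanInverseMeetMonoid S] (a b : S) : S := BooleanInverseMeetMonoid.inf a b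

/-- The fixed-point operator `φ(s) = s ∧ 1`. -/
def phi [BooleanInverseMeetMonoid S] (s : S) : S := binf s 1

/-- The support operator `σ(s) = \overline{φ(s)} ⋅ s⁻¹ s`. -/
def sigma [BooleanInverseMeetMonoid S] (s : S) : S := bcompl (phi s) * (s⁻¹ * s)

/-- An infinitesimal is a non-zero element that squares to zero. -/
def Infinitesimal [InverseMonoidWithZero S] (a : S) : Prop := a ≠ 0 ∧ a * a = 0

/-- A (two-sided) ideal. -/
def IsMIdeal [InverseMonoidWithZero S] (I : Set S) : Prop :=
  I.Nonempty ∧ ∀ a ∈ I, ∀ s : S, s * a ∈ I ∧ a * s ∈ I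

/-- A ∨-ideal: an ideal closed under joins of compatible pairs. -/
def IsVIdeal [DistributiveInverseMonoid S] (I : Set S) : Prop :=
  IsMIdeal I ∧ ∀ a ∈ I, ∀ b ∈ I, Compat a b → bsup a b ∈ I

end MoreDefs

/-- 0-simplifying: the only ∨-ideals are `{0}` and `S`. -/
def ZeroSimplifying (S : Type u) [DistributiveInverseMonoid S] : Prop :=
  ∀ I : Set S, IsVIdeal I → I = {0} ∨ I = Set.univ

/-- 0-simple: non-trivial and the only ideals are `{0}` and `S`. -/
def ZeroSimple (S : Type u) [InverseMonoidWithZero S] : Prop :=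
  (∃ s : S, s ≠ 0) ∧ ∀ I : Set S, IsMIdeal I → I = {0} ∨ I = Set.univ

/-- Fundamental: every element commuting with all idempotents is an idempotent. -/
def Fundamental (S : Type u) [InverseMonoidWithZero S] : Prop :=
  ∀ a : S, (∀ e : S, e * e = e → a * e = e * a) → a * a = a

/-- The Boolean algebra of idempotents is atomless. -/
def IdemAtomless (S : Type u) [InverseMonoidWithZero S] : Prop :=
  ∀ e : S, e * e = e → e ≠ 0 → ∃ f : S, f * f = f ∧ f ≠ 0 ∧ nle f e ∧ f ≠ e

section Filters

variable {S : Type u}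

/-- A filter in a Boolean inverse ∧-monoid: a nonempty subset closed under
binary meets and upward closed in the natural partial order. -/
def IsMFilter [BooleanInverseMeetMonoid S] (A : Set S) : Prop :=
  A.Nonempty ∧ (∀ a ∈ A, ∀ b ∈ A, binf a b ∈ A) ∧ ∀ a ∈ A, ∀ b : S, nle a b → b ∈ A

/-- An ultrafilter: a maximal proper filter. -/
def IsMUltrafilter [BooleanInverseMeetMonoid S] (A : Set S) : Prop :=
  IsMFilter A ∧ (0 : S) ∉ A ∧ ∀ B : Set S, IsMFilter B → (0 : S) ∉ B → A ⊆ B → A = B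

/-- A filter of the Boolean algebra of idempotents (meet of idempotents is
their product). -/
def IsIdemFilter [InverseMonoidWithZero S] (F : Set S) : Prop :=
  F.Nonempty ∧ (∀ e ∈ F, e * e = e) ∧ (∀ e ∈ F, ∀ f ∈ F, e * f ∈ F) ∧
    ∀ e ∈ F, ∀ f : S, f * f = f → nle e f → f ∈ F

/-- An ultrafilter of the Boolean algebra of idempotents. -/
def IsIdemUltrafilter [InverseMonoidWithZero S] (F : Set S) : Prop :=
  IsIdemFilter F ∧ (0 : S) ∉ F ∧
    ∀ G : Set S, IsIdemFilter G → (0 : S) ∉ G → F ⊆ G → F = G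

end Filters

section PencilDefs

variable {S : Type u}

/-- `Preceq e f`: there is a pencil from `e` to `f`, i.e. finitely many
elements `x₁, …, xₘ` with `r(xᵢ) ≤ f` for all `i` and `e = ⋁ d(xᵢ)`
(a least upper bound for the natural partial order). -/
def Preceq [DistributiveInverseMonoid S] (e f : S) : Prop :=
  ∃ l : List S, l ≠ [] ∧ (∀ x ∈ l, nle (x * x⁻¹) f) ∧
    (∀ x ∈ l, nle (x⁻¹ * x) e) ∧ ∀ c : S, (∀ x ∈ l, nle (x⁻¹ * x) c) → nle e c

/-- Piecewise factorizable: every element is a finite join of elements each of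
which lies beneath a unit. -/
def PiecewiseFactorizable (S : Type u) [DistributiveInverseMonoid S] : Prop :=
  ∀ s : S, ∃ l : List S, l ≠ [] ∧ (∀ x ∈ l, ∃ g : S, IsUnit g ∧ nle x g) ∧
    (∀ x ∈ l, nle x s) ∧ ∀ c : S, (∀ x ∈ l, nle x c) → nle s c

/-- A properly infinite idempotent. -/
def ProperlyInfinite [DistributiveInverseMonoid S] (e : S) : Prop :=
  ∃ x y : S, x⁻¹ * x = e ∧ y⁻¹ * y = e ∧ Orth (x * x⁻¹) (y * y⁻¹) ∧
    nle (bsup (x * x⁻¹) (y * y⁻¹)) e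

end PencilDefs

/-- Purely infinite: every non-zero idempotent is properly infinite. -/
def PurelyInfinite (S : Type u) [DistributiveInverseMonoid S] : Prop :=
  ∀ e : S, e * e = e → e ≠ 0 → ProperlyInfinite e

/-!
Let `A` be an ultrafilter containing no infinitesimal, and write `d(x) = x⁻¹ x`.
Atomlessness gives `b ∈ A` and a nonzero idempotent `w` with `b w = 0`. Split `b` along the
idempotent `k = b⁻¹ w b`: the piece `b k = w b` squares to zero, so it is not in `A`, and the
other piece `c = b k̄ ∈ A` satisfies `c w = w c = 0`. As `S` is 0-simplifying, any ∨-ideal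
containing `w` is all of `S`; read at the prime set `{x | c x ∈ A}` this yields `t` with
`c d(w t) ∈ A`. Then `p = c (w t)⁻¹`
and `q = w t d(c)` square to zero because `w` annihilates `c` on both sides, and
`p q = c d(w t) ∈ A`.
-/

namespace InverseMonoidWithZero

section Algebra

variable {S : Type u} [InverseMonoidWithZero S] {e f : S}

scoped instance : MonoidWithZero S where
  zero_mul := zero_mul'
  mul_zero := mul_zero'

scoped instance : InvolutiveInv S where
  inv_inv a := (inv_unique a⁻¹ a (inv_mul_inv a) (mul_inv_mul a)).symm

theorem mul_inv_mul_assoc (a : S) : a * (a⁻¹ * a) = a := by rw [← mul_assoc, mul_inv_mul]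

theorem mul_inv_mul_cancel_left (a x : S) : a * (a⁻¹ * (a * x)) = a * x := by
  rw [← mul_assoc a⁻¹, ← mul_assoc, mul_inv_mul_assoc]

theorem inv_mul_inv_cancel_left (a x : S) : a⁻¹ * (a * (a⁻¹ * x)) = a⁻¹ * x := by
  rw [← mul_assoc a, ← mul_assoc, ← mul_assoc, inv_mul_inv]

theorem isIdempotentElem_inv_mul_self (a : S) : IsIdempotentElem (a⁻¹ * a) := by
  rw [IsIdempotentElem, mul_assoc, mul_inv_mul_assoc]

theorem isIdempotentElem_mul_inv_self (a : S) : IsIdempotentElem (a * a⁻¹) := by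
  simpa using isIdempotentElem_inv_mul_self a⁻¹

theorem inv_eq_self_of_isIdempotentElem (he : IsIdempotentElem e) : e⁻¹ = e :=
  (inv_unique e e (by rw [he.eq, he.eq]) (by rw [he.eq, he.eq])).symm

theorem isIdempotentElem_mul (he : IsIdempotentElem e) (hf : IsIdempotentElem f) :
    IsIdempotentElem (e * f) := by
  obtain ⟨x, hx⟩ : ∃ x, x = (e * f)⁻¹ := ⟨_, rfl⟩
  have hinv : e * (f * (x * (e * f))) = e * f := by rw [hx, ← mul_assoc, mul_inv_mul_assoc]
  have hinv' (y : S) : x * (e * (f * (x * y))) = x * y := by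
    rw [hx, ← mul_assoc e, inv_mul_inv_cancel_left]
  -- `f * x * e` is a second inverse of `e * f`, hence equals `x`
  have hfxe : f * x * e = x := hx ▸ inv_unique (e * f) (f * x * e)
    (by simp only [mul_assoc]; rw [hf.mul_self_mul, he.mul_self_mul, hinv])
    (by simp only [mul_assoc]; rw [he.mul_self_mul, hf.mul_self_mul, hinv'])
  have hxx : IsIdempotentElem x := by
    rw [IsIdempotentElem, ← hfxe]; simp only [mul_assoc]; rw [hinv']
  rw [← inv_inv (e * f), ← hx, inv_eq_self_of_isIdempotentElem hxx]
  exact hxx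

theorem commute_of_isIdempotentElem (he : IsIdempotentElem e) (hf : IsIdempotentElem f) :
    Commute e f := by
  have hef := isIdempotentElem_mul he hf
  have hfe := isIdempotentElem_mul hf he
  -- `f * e` is an inverse of the idempotent `e * f`
  have : f * e = (e * f)⁻¹ := inv_unique (e * f) (f * e)
    (by rw [mul_assoc e f, ← mul_assoc f f, hf.eq, ← mul_assoc, ← mul_assoc, he.mul_mul_self,
      mul_assoc (e * f), hef.eq])
    (by rw [mul_assoc f e, ← mul_assoc e e, he.eq, ← mul_assoc, ← mul_assoc, hf.mul_mul_self,
      mul_assoc (f * e), hfe.eq])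
  rw [Commute, SemiconjBy, this, inv_eq_self_of_isIdempotentElem hef]

scoped instance : DivisionMonoid S where
  mul_inv_rev a b := by
    have hc := commute_of_isIdempotentElem (isIdempotentElem_mul_inv_self b)
      (isIdempotentElem_inv_mul_self a)
    refine (inv_unique (a * b) (b⁻¹ * a⁻¹) ?_ ?_).symm
    · calc a * b * (b⁻¹ * a⁻¹) * (a * b) = a * ((b * b⁻¹) * (a⁻¹ * a)) * b := by
            simp only [mul_assoc]
        _ = a * b := by
          rw [hc.eq]; simp only [mul_assoc, mul_inv_mul_cancel_left, mul_inv_mul_assoc]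
    · calc b⁻¹ * a⁻¹ * (a * b) * (b⁻¹ * a⁻¹)
            = b⁻¹ * ((a⁻¹ * a) * (b * b⁻¹)) * a⁻¹ := by simp only [mul_assoc]
        _ = b⁻¹ * a⁻¹ := by
          rw [← hc.eq]; simp only [mul_assoc, inv_mul_inv_cancel_left]
          rw [← mul_assoc a⁻¹ a, inv_mul_inv]
  inv_eq_of_mul a b h :=
    (inv_unique a b (by rw [h, one_mul]) (by rw [mul_assoc, h, mul_one])).symm

theorem isIdempotentElem_conj (a : S) (he : IsIdempotentElem e) :
    IsIdempotentElem (a * e * a⁻¹) := by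
  have hc := commute_of_isIdempotentElem (isIdempotentElem_inv_mul_self a) he
  calc a * e * a⁻¹ * (a * e * a⁻¹) = a * (e * ((a⁻¹ * a) * e)) * a⁻¹ := by
        simp only [mul_assoc]
    _ = a * e * a⁻¹ := by
      rw [hc.eq, he.mul_self_mul]; simp only [mul_assoc]; rw [← mul_assoc a⁻¹ a, inv_mul_inv]

theorem isIdempotentElem_inv_conj (a : S) (he : IsIdempotentElem e) :
    IsIdempotentElem (a⁻¹ * e * a) := by
  simpa using isIdempotentElem_conj a⁻¹ he

theorem exists_infinitesimal_mul_eq {b c : S} (hcb : c * b = 0) (hbc : b⁻¹ * c = 0)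
    (h : c * (b⁻¹ * b) ≠ 0) :
    ∃ p q : S, Infinitesimal p ∧ Infinitesimal q ∧ p * q = c * (b⁻¹ * b) := by
  have hpq : c * b⁻¹ * (b * (c⁻¹ * c)) = c * (b⁻¹ * b) := by
    calc c * b⁻¹ * (b * (c⁻¹ * c)) = c * ((b⁻¹ * b) * (c⁻¹ * c)) := by
          simp only [mul_assoc]
      _ = c * (b⁻¹ * b) := by
        rw [(commute_of_isIdempotentElem (isIdempotentElem_inv_mul_self b)
          (isIdempotentElem_inv_mul_self c)).eq, ← mul_assoc, mul_inv_mul_assoc]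
  refine ⟨c * b⁻¹, b * (c⁻¹ * c), ⟨left_ne_zero_of_mul (hpq ▸ h), ?_⟩,
    ⟨right_ne_zero_of_mul (hpq ▸ h), ?_⟩, hpq⟩
  · rw [mul_assoc, ← mul_assoc b⁻¹, hbc, zero_mul, mul_zero]
  · simp only [mul_assoc]
    rw [← mul_assoc c b, hcb, zero_mul, mul_zero, mul_zero]

theorem exists_infinitesimal_mul_eq_of_orth {c w : S} (hw : IsIdempotentElem w)
    (hcw : c * w = 0) (hwc : w * c = 0) (t : S) (h : c * ((w * t)⁻¹ * (w * t)) ≠ 0) :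
    ∃ p q : S, Infinitesimal p ∧ Infinitesimal q ∧ p * q = c * ((w * t)⁻¹ * (w * t)) :=
  exists_infinitesimal_mul_eq (by rw [← mul_assoc, hcw, zero_mul])
    (by rw [mul_inv_rev, inv_eq_self_of_isIdempotentElem hw, mul_assoc, hwc, mul_zero]) h

end Algebra

section NaturalOrder

variable {S : Type u} [InverseMonoidWithZero S] {a b c m e f : S}

theorem nle_refl (a : S) : nle a a :=
  ⟨a * a⁻¹, isIdempotentElem_mul_inv_self a, (mul_inv_mul a).symm⟩

theorem nle_trans (hab : nle a b) (hbc : nle b c) : nle a c := by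
  obtain ⟨e, he, rfl⟩ := hab
  obtain ⟨f, hf, rfl⟩ := hbc
  exact ⟨e * f, isIdempotentElem_mul he hf, (mul_assoc e f c).symm⟩

theorem nle_antisymm (hab : nle a b) (hba : nle b a) : a = b := by
  obtain ⟨e, he, hae⟩ := hab
  obtain ⟨f, hf : IsIdempotentElem f, hbf⟩ := hba
  have ha : a = e * f * a := by rw [mul_assoc, ← hbf, hae]
  calc a = e * f * a := ha
    _ = f * (e * f * a) := by
      rw [← mul_assoc, ← mul_assoc, (commute_of_isIdempotentElem hf he).eq, mul_assoc e f f,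
        hf.eq]
    _ = b := by rw [← ha, hbf]

theorem zero_nle (a : S) : nle 0 a := ⟨0, IsIdempotentElem.zero, (zero_mul a).symm⟩

theorem eq_zero_of_nle_zero (h : nle a 0) : a = 0 := by
  obtain ⟨e, -, rfl⟩ := h
  exact mul_zero e

theorem nle_one (he : IsIdempotentElem e) : nle e 1 := ⟨e, he, (mul_one e).symm⟩

theorem eq_mul_inv_mul_of_nle (h : nle a b) : a = b * (a⁻¹ * a) := by
  obtain ⟨e, he : IsIdempotentElem e, rfl⟩ := h
  rw [mul_inv_rev, inv_eq_self_of_isIdempotentElem he]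
  simp only [mul_assoc]
  rw [he.mul_self_mul, ← mul_assoc, ← mul_assoc,
    ← (commute_of_isIdempotentElem he (isIdempotentElem_mul_inv_self b)).eq, mul_assoc,
    mul_inv_mul]

theorem nle_of_eq_mul (hf : IsIdempotentElem f) (h : a = b * f) : nle a b := by
  refine ⟨b * f * b⁻¹, isIdempotentElem_conj b hf, ?_⟩
  rw [h]
  simp only [mul_assoc]
  rw [← (commute_of_isIdempotentElem (isIdempotentElem_inv_mul_self b) hf).eq, ← mul_assoc,
    mul_inv_mul_assoc]

theorem nle_mul_left (c : S) (h : nle a b) : nle (c * a) (c * b) :=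
  nle_of_eq_mul (isIdempotentElem_inv_mul_self a) (by rw [mul_assoc, ← eq_mul_inv_mul_of_nle h])

theorem nle_mul_right (c : S) (h : nle a b) : nle (a * c) (b * c) := by
  obtain ⟨e, he, rfl⟩ := h
  exact ⟨e, he, mul_assoc e b c⟩

theorem inv_mul_self_nle_of_mul_eq (h : a * e = a) : nle (a⁻¹ * a) e :=
  ⟨a⁻¹ * a, isIdempotentElem_inv_mul_self a, by rw [mul_assoc, h]⟩

theorem compat_of_nle (ha : nle a m) (hb : nle b m) : Compat a b := by
  obtain ⟨e, he, rfl⟩ := ha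
  obtain ⟨f, hf, rfl⟩ := hb
  have hr : e * m * (f * m)⁻¹ = e * (m * m⁻¹ * f) := by
    rw [mul_inv_rev, inv_eq_self_of_isIdempotentElem hf]; simp only [mul_assoc]
  have hd : (e * m)⁻¹ * (f * m) = m⁻¹ * (e * f) * m := by
    rw [mul_inv_rev, inv_eq_self_of_isIdempotentElem he]; simp only [mul_assoc]
  constructor
  · rw [hr]
    exact isIdempotentElem_mul he (isIdempotentElem_mul (isIdempotentElem_mul_inv_self m) hf)
  · rw [hd]
    exact isIdempotentElem_inv_conj m (isIdempotentElem_mul he hf)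

end NaturalOrder

section Distributive

variable {S : Type u} [DistributiveInverseMonoid S] {a b c e f : S}

theorem le_bsup_left (h : Compat a b) : nle a (bsup a b) :=
  DistributiveInverseMonoid.le_sup_left a b h

theorem le_bsup_right (h : Compat a b) : nle b (bsup a b) :=
  DistributiveInverseMonoid.le_sup_right a b h

theorem bsup_le (h : Compat a b) (hac : nle a c) (hbc : nle b c) : nle (bsup a b) c :=
  DistributiveInverseMonoid.sup_le a b c h hac hbc

theorem mul_bsup (c : S) (h : Compat a b) : c * bsup a b = bsup (c * a) (c * b) :=
  DistributiveInverseMonoid.mul_sup a b c h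

theorem bsup_mul (c : S) (h : Compat a b) : bsup a b * c = bsup (a * c) (b * c) :=
  DistributiveInverseMonoid.sup_mul a b c h

theorem compat_mul_left (c : S) (h : Compat a b) : Compat (c * a) (c * b) :=
  compat_of_nle (nle_mul_left c (le_bsup_left h)) (nle_mul_left c (le_bsup_right h))

theorem compat_mul_right (c : S) (h : Compat a b) : Compat (a * c) (b * c) :=
  compat_of_nle (nle_mul_right c (le_bsup_left h)) (nle_mul_right c (le_bsup_right h))

theorem compat_of_isIdempotentElem (he : IsIdempotentElem e) (hf : IsIdempotentElem f) :
    Compat e f :=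
  compat_of_nle (nle_one he) (nle_one hf)

theorem bsup_zero (a : S) : bsup a 0 = a :=
  have h : Compat a 0 := compat_of_nle (nle_refl a) (zero_nle a)
  nle_antisymm (bsup_le h (nle_refl a) (zero_nle a)) (le_bsup_left h)

theorem inv_mul_self_bsup_nle (h : Compat a b) :
    nle ((bsup a b)⁻¹ * bsup a b) (bsup (a⁻¹ * a) (b⁻¹ * b)) := by
  apply inv_mul_self_nle_of_mul_eq
  rw [mul_bsup _ (compat_of_isIdempotentElem (isIdempotentElem_inv_mul_self a)
      (isIdempotentElem_inv_mul_self b)),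
    ← eq_mul_inv_mul_of_nle (le_bsup_left h), ← eq_mul_inv_mul_of_nle (le_bsup_right h)]

end Distributive

section Boolean

variable {S : Type u} [BooleanInverseMonoid S] {e : S}

theorem isIdempotentElem_bcompl (he : IsIdempotentElem e) : IsIdempotentElem (bcompl e) :=
  BooleanInverseMonoid.compl_idem e he

theorem mul_bcompl (he : IsIdempotentElem e) : e * bcompl e = 0 :=
  BooleanInverseMonoid.mul_compl e he

theorem bcompl_mul (he : IsIdempotentElem e) : bcompl e * e = 0 := by
  rw [← (commute_of_isIdempotentElem he (isIdempotentElem_bcompl he)).eq, mul_bcompl he]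

theorem bsup_bcompl (he : IsIdempotentElem e) : bsup e (bcompl e) = 1 :=
  BooleanInverseMonoid.sup_compl e he

theorem eq_bsup_mul_bcompl (a : S) (he : IsIdempotentElem e) :
    a = bsup (a * e) (a * bcompl e) := by
  rw [← mul_bsup a (compat_of_isIdempotentElem he (isIdempotentElem_bcompl he)), bsup_bcompl he,
    mul_one]

theorem bcompl_ne_zero (he : IsIdempotentElem e) (h : e ≠ 1) : bcompl e ≠ 0 := fun h0 =>
  h (by rw [← bsup_bcompl he, h0, bsup_zero])

end Boolean

section Meet

variable {S : Type u} [BooleanInverseMeetMonoid S] {a b c : S}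

theorem binf_le_left (a b : S) : nle (binf a b) a := BooleanInverseMeetMonoid.inf_le_left a b

theorem binf_le_right (a b : S) : nle (binf a b) b := BooleanInverseMeetMonoid.inf_le_right a b

theorem le_binf (ha : nle c a) (hb : nle c b) : nle c (binf a b) :=
  BooleanInverseMeetMonoid.le_inf a b c ha hb

end Meet

end InverseMonoidWithZero

section

open InverseMonoidWithZero

structure IsPrimeUpSet {S : Type u} [DistributiveInverseMonoid S] (G : Set S) : Prop where
  mem_of_nle {a b : S} : a ∈ G → nle a b → b ∈ G
  mem_or_mem {a b : S} : Compat a b → bsup a b ∈ G → a ∈ G ∨ b ∈ G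

namespace IsPrimeUpSet

variable {S : Type u} [DistributiveInverseMonoid S] {G : Set S}

theorem preimage_mul_left (hG : IsPrimeUpSet G) (c : S) : IsPrimeUpSet {x | c * x ∈ G} where
  mem_of_nle ha hab := hG.mem_of_nle ha (nle_mul_left c hab)
  mem_or_mem hab h := hG.mem_or_mem (compat_mul_left c hab) (by rwa [← mul_bsup c hab])

theorem preimage_mul_right (hG : IsPrimeUpSet G) (c : S) : IsPrimeUpSet {x | x * c ∈ G} where
  mem_of_nle ha hab := hG.mem_of_nle ha (nle_mul_right c hab)
  mem_or_mem hab h := hG.mem_or_mem (compat_mul_right c hab) (by rwa [← bsup_mul c hab])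

end IsPrimeUpSet

section ZeroSimplifying

variable {S : Type u} [DistributiveInverseMonoid S]

/-- Quantifying over all prime up-sets, rather than fixing one, is what makes this set closed
under right multiplication. -/
def domIdeal (w : S) : Set S :=
  {z | ∀ G : Set S, IsPrimeUpSet G → z⁻¹ * z ∈ G → ∃ t, (w * t)⁻¹ * (w * t) ∈ G}

theorem mem_domIdeal_self (w : S) : w ∈ domIdeal w := fun _ _ hw => ⟨1, by rwa [mul_one]⟩

theorem isVIdeal_domIdeal (w : S) : IsVIdeal (domIdeal w) := by
  refine ⟨⟨⟨w, mem_domIdeal_self w⟩, fun z hz s => ⟨?_, ?_⟩⟩, ?_⟩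
  · intro G hG hsz
    refine hz G hG (hG.mem_of_nle hsz (inv_mul_self_nle_of_mul_eq ?_))
    rw [mul_assoc, mul_inv_mul_assoc]
  · intro G hG hzs
    obtain ⟨t, ht⟩ := hz _ ((hG.preimage_mul_right s).preimage_mul_left s⁻¹)
      (by simpa only [Set.mem_ofPred_eq, mul_inv_rev, mul_assoc] using hzs)
    exact ⟨t * s, by simpa only [Set.mem_ofPred_eq, mul_inv_rev, mul_assoc] using ht⟩
  · intro a ha b hb hab G hG hsup
    rcases hG.mem_or_mem (compat_of_isIdempotentElem (isIdempotentElem_inv_mul_self a)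
        (isIdempotentElem_inv_mul_self b)) (hG.mem_of_nle hsup (inv_mul_self_bsup_nle hab))
      with h | h
    exacts [ha G hG h, hb G hG h]

theorem exists_mem_of_zeroSimplifying (h0 : ZeroSimplifying S) {w : S} (hw : w ≠ 0) {z : S}
    {G : Set S} (hG : IsPrimeUpSet G) (hz : z⁻¹ * z ∈ G) :
    ∃ t, (w * t)⁻¹ * (w * t) ∈ G := by
  rcases h0 _ (isVIdeal_domIdeal w) with h | h
  · exact absurd (Set.mem_singleton_iff.mp (h ▸ mem_domIdeal_self w)) hw
  · exact (h ▸ Set.mem_univ z : z ∈ domIdeal w) G hG hz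

end ZeroSimplifying

namespace IsMUltrafilter

variable {S : Type u} [BooleanInverseMeetMonoid S] {A : Set S}

theorem ne_zero_of_mem (hA : IsMUltrafilter A) {a : S} (ha : a ∈ A) : a ≠ 0 :=
  fun h => hA.2.1 (h ▸ ha)

theorem exists_binf_eq_zero (hA : IsMUltrafilter A) {s : S} (hs : s ∉ A) :
    ∃ c ∈ A, binf s c = 0 := by
  by_contra! h
  obtain ⟨⟨⟨a₀, ha₀⟩, hmeet, -⟩, -, hmax⟩ := hA
  -- the filter generated by `A` and `s` is proper, so it is `A`
  set B : Set S := {t | ∃ c ∈ A, nle (binf s c) t}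
  have hB : IsMFilter B := by
    refine ⟨⟨s, a₀, ha₀, binf_le_left s a₀⟩, ?_, ?_⟩
    · rintro t₁ ⟨c₁, hc₁, h₁⟩ t₂ ⟨c₂, hc₂, h₂⟩
      refine ⟨binf c₁ c₂, hmeet _ hc₁ _ hc₂, le_binf ?_ ?_⟩
      · exact nle_trans (le_binf (binf_le_left _ _)
          (nle_trans (binf_le_right _ _) (binf_le_left _ _))) h₁
      · exact nle_trans (le_binf (binf_le_left _ _)
          (nle_trans (binf_le_right _ _) (binf_le_right _ _))) h₂
    · rintro t₁ ⟨c, hc, h₁⟩ t₂ h₁₂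
      exact ⟨c, hc, nle_trans h₁ h₁₂⟩
  have hB0 : (0 : S) ∉ B := fun ⟨c, hc, h0⟩ => h c hc (eq_zero_of_nle_zero h0)
  have hAB : A = B := hmax B hB hB0 fun a ha => ⟨a, ha, binf_le_right s a⟩
  exact hs (hAB ▸ ⟨a₀, ha₀, binf_le_left s a₀⟩)

theorem mem_or_mem_of_bsup_mem (hA : IsMUltrafilter A) {a b : S} (hab : Compat a b)
    (h : bsup a b ∈ A) : a ∈ A ∨ b ∈ A := by
  by_contra! ⟨ha, hb⟩
  obtain ⟨c, hc, hac⟩ := hA.exists_binf_eq_zero ha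
  obtain ⟨d, hd, hbd⟩ := hA.exists_binf_eq_zero hb
  set m := binf (bsup a b) (binf c d)
  have hm : m ∈ A := hA.1.2.1 _ h _ (hA.1.2.1 _ hc _ hd)
  -- `m = (a ∨ b) d(m)` splits as `a d(m) ∨ b d(m)`, and both pieces lie below a zero meet
  have hm_eq : m = bsup a b * (m⁻¹ * m) := eq_mul_inv_mul_of_nle (binf_le_left _ _)
  have hsplit : m = bsup (a * (m⁻¹ * m)) (b * (m⁻¹ * m)) := by
    rw [← bsup_mul _ hab, ← hm_eq]
  have hle : ∀ x, nle x (bsup a b) → nle (x * (m⁻¹ * m)) m := fun x hx => by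
    have := nle_mul_right (m⁻¹ * m) hx
    rwa [← hm_eq] at this
  have ham : a * (m⁻¹ * m) = 0 := eq_zero_of_nle_zero (hac ▸ le_binf
    (nle_of_eq_mul (isIdempotentElem_inv_mul_self m) rfl)
    (nle_trans (hle a (le_bsup_left hab))
      (nle_trans (binf_le_right _ _) (binf_le_left _ _))))
  have hbm : b * (m⁻¹ * m) = 0 := eq_zero_of_nle_zero (hbd ▸ le_binf
    (nle_of_eq_mul (isIdempotentElem_inv_mul_self m) rfl)
    (nle_trans (hle b (le_bsup_right hab))
      (nle_trans (binf_le_right _ _) (binf_le_right _ _))))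
  rw [ham, hbm, bsup_zero] at hsplit
  exact hA.ne_zero_of_mem hm hsplit

theorem isPrimeUpSet (hA : IsMUltrafilter A) : IsPrimeUpSet A where
  mem_of_nle ha hab := hA.1.2.2 _ ha _ hab
  mem_or_mem := hA.mem_or_mem_of_bsup_mem

theorem mul_mem_or_mul_bcompl_mem (hA : IsMUltrafilter A) {a e : S} (ha : a ∈ A)
    (he : IsIdempotentElem e) : a * e ∈ A ∨ a * bcompl e ∈ A :=
  hA.mem_or_mem_of_bsup_mem
    (compat_mul_left a (compat_of_isIdempotentElem he (isIdempotentElem_bcompl he)))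
    (eq_bsup_mul_bcompl a he ▸ ha)

theorem exists_mem_mul_eq_zero (hA : IsMUltrafilter A) (hat : IdemAtomless S) :
    ∃ b ∈ A, ∃ w, IsIdempotentElem w ∧ w ≠ 0 ∧ b * w = 0 := by
  obtain ⟨a, ha⟩ := hA.1.1
  have h10 : (1 : S) ≠ 0 := fun h => hA.ne_zero_of_mem ha (by rw [← mul_one a, h, mul_zero])
  obtain ⟨f, hf, hf0, -, hf1⟩ := hat 1 (mul_one 1) h10
  rcases hA.mul_mem_or_mul_bcompl_mem ha hf with h | h
  · exact ⟨a * f, h, bcompl f, isIdempotentElem_bcompl hf, bcompl_ne_zero hf hf1,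
      by rw [mul_assoc, mul_bcompl hf, mul_zero]⟩
  · exact ⟨a * bcompl f, h, f, hf, hf0, by rw [mul_assoc, bcompl_mul hf, mul_zero]⟩

theorem exists_mem_mul_eq_zero_and_mul_eq_zero (hA : IsMUltrafilter A)
    (hinf : ¬∃ x ∈ A, Infinitesimal x) {b w : S} (hb : b ∈ A) (hw : IsIdempotentElem w)
    (hbw : b * w = 0) : ∃ c ∈ A, c * w = 0 ∧ w * c = 0 := by
  set k := b⁻¹ * w * b
  have hk : IsIdempotentElem k := isIdempotentElem_inv_conj b hw
  have hwb : w * b = b * k :=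
    calc w * b = w * (b * b⁻¹) * b := by rw [mul_assoc, mul_inv_mul]
      _ = b * b⁻¹ * w * b := by
        rw [(commute_of_isIdempotentElem hw (isIdempotentElem_mul_inv_self b)).eq]
      _ = b * k := by simp only [k, mul_assoc]
  rcases hA.mul_mem_or_mul_bcompl_mem hb hk with h | h
  · refine absurd ⟨w * b, hwb ▸ h, hA.ne_zero_of_mem (hwb ▸ h), ?_⟩ hinf
    rw [mul_assoc, ← mul_assoc b, hbw, zero_mul, mul_zero]
  · refine ⟨b * bcompl k, h, ?_, ?_⟩
    · rw [mul_assoc, ← (commute_of_isIdempotentElem hw (isIdempotentElem_bcompl hk)).eq,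
        ← mul_assoc, hbw, zero_mul]
    · rw [← mul_assoc, hwb, mul_assoc, mul_bcompl hk, mul_zero]

end IsMUltrafilter

end

theorem statement9_general (S : Type u) [BooleanInverseMeetMonoid S]
    (hat : IdemAtomless S) (h0 : ZeroSimplifying S)
    (A : Set S) (hA : IsMUltrafilter A) :
    (∃ a ∈ A, Infinitesimal a) ∨
      ∃ a b : S, Infinitesimal a ∧ Infinitesimal b ∧ a * b ∈ A := by
  by_cases hinf : ∃ a ∈ A, Infinitesimal a
  · exact Or.inl hinf
  right
  obtain ⟨b, hb, w, hw, hw0, hbw⟩ := hA.exists_mem_mul_eq_zero hat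
  obtain ⟨c, hc, hcw, hwc⟩ := hA.exists_mem_mul_eq_zero_and_mul_eq_zero hinf hb hw hbw
  obtain ⟨t, ht⟩ := exists_mem_of_zeroSimplifying h0 hw0 (hA.isPrimeUpSet.preimage_mul_left c)
    (z := c) (by rwa [Set.mem_ofPred_eq, InverseMonoidWithZero.mul_inv_mul_assoc])
  obtain ⟨p, q, hp, hq, hpq⟩ := InverseMonoidWithZero.exists_infinitesimal_mul_eq_of_orth
    hw hcw hwc t (hA.ne_zero_of_mem ht)
  exact ⟨p, q, hp, hq, hpq ▸ ht⟩

/-- In a 0-simplifying Tarski monoid every ultrafilter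
contains an infinitesimal or a product of two infinitesimals. -/
theorem statement9 (S : Type u) [BooleanInverseMeetMonoid S] [Countable S]
    (hat : IdemAtomless S) (h0 : ZeroSimplifying S)
    (A : Set S) (hA : IsMUltrafilter A) :
    (∃ a ∈ A, Infinitesimal a) ∨
      ∃ a b : S, Infinitesimal a ∧ Infinitesimal b ∧ a * b ∈ A :=
  statement9_general S hat h0 A hA
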